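/- arXiv:2012.11035 — 5 statements merged into one kernel-verified Lean document; each statement's English description precedes it below -/
import Mathlib

section
/- Let D, W ⊆ ℝ^d, let K be a Markov kernel from D to probability measures on W, and let γ ≥ 1. Then the contraction coefficient of K under the E_γ-divergence satisfies η_γ(K) = sup_{w₁,w₂ ∈ D} E_γ(K(w₁)‖K(w₂)). -/
open MeasureTheory ProbabilityTheory Real

/-- The hockey-stick (`E_γ`) divergence: `E_γ(μ‖ν) = sup_A [μ(A) − γ·ν(A)]`,
the supremum over all measurable sets `A`. -/
noncomputable def Egamma {α : Type*} [MeasurableSpace α] (γ : ℝ) (μ ν : Measure α) : ℝ :=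
  ⨆ (A : Set α) (_ : MeasurableSet A), ((μ A).toReal - γ * (ν A).toReal)

/-- The contraction coefficient of a kernel `K` under the `E_γ`-divergence:
the supremum of `E_γ(μK‖νK)/E_γ(μ‖ν)` over pairs of probability measures with
`E_γ(μ‖ν) ≠ 0`, where `μK` is the push-forward `μK = ∫ K(w) dμ(w)`. -/
noncomputable def etaGamma {α β : Type*} [MeasurableSpace α] [MeasurableSpace β]
    (γ : ℝ) (K : α → Measure β) : ℝ :=
  ⨆ p : {p : Measure α × Measure α //
      IsProbabilityMeasure p.1 ∧ IsProbabilityMeasure p.2 ∧ Egamma γ p.1 p.2 ≠ 0},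
    Egamma γ (p.1.1.bind K) (p.1.2.bind K) / Egamma γ p.1.1 p.1.2

/-! Fix a measurable `A` and put `f x = K x A ∈ [0,1]` and `c = sup E_γ(K x‖K y)`, so that
`f x - γ f y ≤ c`. Split along a Hahn decomposition `s` of `μ` against `γν`; with `m = inf f`,
`f ≤ c + γ m` on `s` and `f ≥ m` off `s` give
`μK(A) - γ νK(A) ≤ c T - m (γ - 1) (1 - T) ≤ c E_γ(μ‖ν)`, where `T = μ(s) - γ ν(s) ≤ E_γ(μ‖ν) ≤ 1`.
Hence `η_γ(K) ≤ c`. Conversely, `E_γ(K x‖K y)` is the numerator of the ratio at the Dirac pair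
`(δ_x, δ_y)`, whose denominator lies in `[0, 1]`. -/

section Egamma
variable {α : Type*} [MeasurableSpace α] {γ : ℝ} {μ ν : Measure α}

lemma Egamma_le {b : ℝ} (hb : 0 ≤ b) (h : ∀ A, MeasurableSet A → μ.real A - γ * ν.real A ≤ b) :
    Egamma γ μ ν ≤ b :=
  Real.iSup_le (fun A => Real.iSup_le (h A) hb) hb

lemma le_Egamma [IsFiniteMeasure μ] (hγ : 0 ≤ γ) {A : Set α} (hA : MeasurableSet A) :
    μ.real A - γ * ν.real A ≤ Egamma γ μ ν := by
  have hbdd : ∀ B, (⨆ _ : MeasurableSet B, μ.real B - γ * ν.real B) ≤ μ.real Set.univ :=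
    fun B => Real.iSup_le (fun _ => by
      have := measureReal_mono (μ := μ) (Set.subset_univ B)
      nlinarith [measureReal_nonneg (μ := ν) (s := B)]) measureReal_nonneg
  calc μ.real A - γ * ν.real A = ⨆ _ : MeasurableSet A, μ.real A - γ * ν.real A :=
        (ciSup_pos (f := fun _ => μ.real A - γ * ν.real A) hA).symm
    _ ≤ Egamma γ μ ν := le_ciSup ⟨_, Set.forall_mem_range.2 hbdd⟩ A

lemma Egamma_nonneg [IsFiniteMeasure μ] (hγ : 0 ≤ γ) : 0 ≤ Egamma γ μ ν := by
  simpa using le_Egamma (μ := μ) (ν := ν) hγ MeasurableSet.empty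

lemma Egamma_le_one [IsProbabilityMeasure μ] (hγ : 0 ≤ γ) : Egamma γ μ ν ≤ 1 :=
  Egamma_le zero_le_one fun A _ => by
    nlinarith [measureReal_le_one (μ := μ) (s := A), measureReal_nonneg (μ := ν) (s := A)]

lemma integral_sub_integral_le_of_isHahnDecomposition {ρ : Measure α} [IsFiniteMeasure μ]
    [IsFiniteMeasure ρ] {s : Set α} (hs : IsHahnDecomposition ρ μ s) {f : α → ℝ}
    (hfμ : Integrable f μ) (hfρ : Integrable f ρ) {m M : ℝ} (hm : ∀ x, m ≤ f x)
    (hM : ∀ x, f x ≤ M) :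
    ∫ x, f x ∂μ - ∫ x, f x ∂ρ ≤ M * (μ.real s - ρ.real s) + m * (μ.real sᶜ - ρ.real sᶜ) := by
  have hon : ∫ x in s, (M - f x) ∂ρ ≤ ∫ x in s, (M - f x) ∂μ :=
    integral_mono_measure hs.le_on (ae_of_all _ fun x => sub_nonneg.2 (hM x))
      ((integrable_const M).sub hfμ).restrict
  have hoff : ∫ x in sᶜ, (f x - m) ∂μ ≤ ∫ x in sᶜ, (f x - m) ∂ρ :=
    integral_mono_measure hs.ge_on_compl (ae_of_all _ fun x => sub_nonneg.2 (hm x))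
      (hfρ.sub (integrable_const m)).restrict
  rw [integral_sub (integrable_const M) hfρ.restrict, integral_sub (integrable_const M)
    hfμ.restrict, setIntegral_const, setIntegral_const, smul_eq_mul, smul_eq_mul] at hon
  rw [integral_sub hfμ.restrict (integrable_const m), integral_sub hfρ.restrict
    (integrable_const m), setIntegral_const, setIntegral_const, smul_eq_mul, smul_eq_mul] at hoff
  rw [← integral_add_compl hs.measurableSet hfμ, ← integral_add_compl hs.measurableSet hfρ]
  linarith

lemma integral_sub_mul_integral_le_mul_Egamma [IsProbabilityMeasure μ] [IsProbabilityMeasure ν]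
    (hγ : 1 ≤ γ) {c : ℝ} (hc : 0 ≤ c) {f : α → ℝ} (hf : Measurable f) (hf0 : ∀ x, 0 ≤ f x)
    (hfc : ∀ x y, f x - γ * f y ≤ c) :
    ∫ x, f x ∂μ - γ * ∫ x, f x ∂ν ≤ c * Egamma γ μ ν := by
  have := nonempty_of_isProbabilityMeasure μ
  set m := ⨅ x, f x
  have hm0 : 0 ≤ m := le_ciInf hf0
  have hmf : ∀ x, m ≤ f x := ciInf_le ⟨0, Set.forall_mem_range.2 hf0⟩
  have hfM : ∀ x, f x ≤ c + γ * m := fun x => by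
    have : f x - c ≤ γ * m := by
      rw [Real.mul_iInf_of_nonneg (by linarith)]
      exact le_ciInf fun y => by linarith [hfc x y]
    linarith
  have hint : ∀ (κ : Measure α) [IsFiniteMeasure κ], Integrable f κ := fun κ _ =>
    .of_bound hf.aestronglyMeasurable (c + γ * m) (ae_of_all _ fun x => by
      rw [Real.norm_of_nonneg (hf0 x)]; exact hfM x)
  set ρ := γ.toNNReal • ν
  have hρ : ∀ A, ρ.real A = γ * ν.real A := fun A => by
    simp [ρ, Real.coe_toNNReal γ (by linarith)]
  have hρf : ∫ x, f x ∂ρ = γ * ∫ x, f x ∂ν := by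
    rw [integral_smul_nnreal_measure, NNReal.smul_def, Real.coe_toNNReal γ (by linarith),
      smul_eq_mul]
  obtain ⟨s, hs⟩ := exists_isHahnDecomposition ρ μ
  have hsplit := integral_sub_integral_le_of_isHahnDecomposition hs (hint μ) (hint ρ) hmf hfM
  rw [hρf, hρ, hρ, probReal_compl_eq_one_sub hs.measurableSet,
    probReal_compl_eq_one_sub hs.measurableSet] at hsplit
  set T := μ.real s - γ * ν.real s
  have hTE : T ≤ Egamma γ μ ν := le_Egamma (by linarith) hs.measurableSet
  have hE1 : Egamma γ μ ν ≤ 1 := Egamma_le_one (by linarith)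
  have hcT : c * T ≤ c * Egamma γ μ ν := mul_le_mul_of_nonneg_left hTE hc
  have hslack : 0 ≤ m * (γ - 1) * (1 - T) :=
    mul_nonneg (mul_nonneg hm0 (by linarith)) (by linarith)
  linarith

end Egamma

section Bind
variable {α β : Type*} [MeasurableSpace α] [MeasurableSpace β] {γ : ℝ} {K : α → Measure β}

lemma measureReal_bind (μ : Measure α) [∀ x, IsFiniteMeasure (K x)]
    (hK : Measurable K) {A : Set β} (hA : MeasurableSet A) :
    (μ.bind K).real A = ∫ x, (K x).real A ∂μ := by
  rw [measureReal_def, Measure.bind_apply hA hK.aemeasurable,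
    ← integral_toReal (f := fun x => K x A) ((Measure.measurable_coe hA).comp hK).aemeasurable
      (ae_of_all _ fun x => measure_lt_top (K x) A)]
  rfl

lemma Egamma_bind_le (μ ν : Measure α) [IsProbabilityMeasure μ] [IsProbabilityMeasure ν]
    [∀ x, IsProbabilityMeasure (K x)] (hK : Measurable K) (hγ : 1 ≤ γ) {c : ℝ}
    (hc : 0 ≤ c) (hKc : ∀ x y, Egamma γ (K x) (K y) ≤ c) :
    Egamma γ (μ.bind K) (ν.bind K) ≤ c * Egamma γ μ ν := by
  refine Egamma_le (mul_nonneg hc (Egamma_nonneg (by linarith))) fun A hA => ?_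
  rw [measureReal_bind μ hK hA, measureReal_bind ν hK hA]
  exact integral_sub_mul_integral_le_mul_Egamma hγ hc
    ((Measure.measurable_coe hA).comp hK).ennreal_toReal (fun _ => measureReal_nonneg)
    fun x y => (le_Egamma (by linarith) hA).trans (hKc x y)

lemma Egamma_bind_div_le (μ ν : Measure α) [IsProbabilityMeasure μ] [IsProbabilityMeasure ν]
    [∀ x, IsProbabilityMeasure (K x)] (hK : Measurable K) (hγ : 1 ≤ γ) {c : ℝ}
    (hc : 0 ≤ c) (hKc : ∀ x y, Egamma γ (K x) (K y) ≤ c) :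
    Egamma γ (μ.bind K) (ν.bind K) / Egamma γ μ ν ≤ c :=
  div_le_of_le_mul₀ (Egamma_nonneg (by linarith)) hc (Egamma_bind_le μ ν hK hγ hc hKc)

lemma etaGamma_le [∀ x, IsProbabilityMeasure (K x)] (hK : Measurable K) (hγ : 1 ≤ γ)
    {c : ℝ} (hc : 0 ≤ c) (hKc : ∀ x y, Egamma γ (K x) (K y) ≤ c) : etaGamma γ K ≤ c :=
  Real.iSup_le (fun ⟨(μ, ν), _, _, _⟩ => Egamma_bind_div_le μ ν hK hγ hc hKc) hc

lemma etaGamma_nonneg [∀ x, IsProbabilityMeasure (K x)] (hK : Measurable K)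
    (hγ : 1 ≤ γ) : 0 ≤ etaGamma γ K :=
  Real.iSup_nonneg fun ⟨(μ, _), _, _, _⟩ =>
    have := isProbabilityMeasure_bind hK.aemeasurable (ae_of_all μ fun _ => inferInstance)
    div_nonneg (Egamma_nonneg (by linarith)) (Egamma_nonneg (by linarith))

lemma Egamma_bind_div_le_etaGamma (μ ν : Measure α) [IsProbabilityMeasure μ]
    [IsProbabilityMeasure ν] [∀ x, IsProbabilityMeasure (K x)] (hK : Measurable K)
    (hγ : 1 ≤ γ) (hμν : Egamma γ μ ν ≠ 0) :
    Egamma γ (μ.bind K) (ν.bind K) / Egamma γ μ ν ≤ etaGamma γ K := by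
  have hKc : ∀ x y, Egamma γ (K x) (K y) ≤ 1 := fun x y => Egamma_le_one (by linarith)
  refine le_ciSup (f := fun p : {p : Measure α × Measure α //
      IsProbabilityMeasure p.1 ∧ IsProbabilityMeasure p.2 ∧ Egamma γ p.1 p.2 ≠ 0} =>
      Egamma γ (p.1.1.bind K) (p.1.2.bind K) / Egamma γ p.1.1 p.1.2) ?_ ⟨(μ, ν), ‹_›, ‹_›, hμν⟩
  exact ⟨1, Set.forall_mem_range.2 fun ⟨(μ, ν), _, _, _⟩ =>
    Egamma_bind_div_le μ ν hK hγ zero_le_one hKc⟩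

lemma Egamma_le_etaGamma [∀ x, IsProbabilityMeasure (K x)] (hK : Measurable K)
    (hγ : 1 ≤ γ) (x y : α) : Egamma γ (K x) (K y) ≤ etaGamma γ K := by
  set E₀ := Egamma γ (Measure.dirac x) (Measure.dirac y)
  have hKxy : Egamma γ (K x) (K y) ≤ 1 * E₀ := by
    simpa only [Measure.dirac_bind hK] using Egamma_bind_le (Measure.dirac x) (Measure.dirac y)
      hK hγ zero_le_one fun x y => Egamma_le_one (by linarith)
  -- `E₀ = 0` when no measurable set separates `x` from `y`; then `(δ_x, δ_y)` is not admissible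
  by_cases hE₀0 : E₀ = 0
  · rw [hE₀0, mul_zero] at hKxy
    exact hKxy.trans (etaGamma_nonneg hK hγ)
  calc Egamma γ (K x) (K y) ≤ Egamma γ (K x) (K y) / E₀ :=
        le_div_self (Egamma_nonneg (by linarith)) ((Egamma_nonneg (by linarith)).lt_of_ne' hE₀0)
          (Egamma_le_one (by linarith))
    _ = Egamma γ ((Measure.dirac x).bind K) ((Measure.dirac y).bind K) / E₀ := by
        rw [Measure.dirac_bind hK, Measure.dirac_bind hK]
    _ ≤ etaGamma γ K := Egamma_bind_div_le_etaGamma _ _ hK hγ hE₀0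

theorem etaGamma_eq_iSup_Egamma [∀ x, IsProbabilityMeasure (K x)] (hK : Measurable K)
    (hγ : 1 ≤ γ) : etaGamma γ K = ⨆ p : α × α, Egamma γ (K p.1) (K p.2) := by
  have hbdd : BddAbove (Set.range fun p : α × α => Egamma γ (K p.1) (K p.2)) :=
    ⟨1, Set.forall_mem_range.2 fun _ => Egamma_le_one (by linarith)⟩
  refine le_antisymm ?_ (Real.iSup_le (fun p => Egamma_le_etaGamma hK hγ p.1 p.2)
    (etaGamma_nonneg hK hγ))
  exact etaGamma_le hK hγ (Real.iSup_nonneg fun _ => Egamma_nonneg (by linarith))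
    fun x y => le_ciSup hbdd (x, y)

end Bind

/-- For `D, W ⊆ ℝ^d`, a Markov kernel `K` from `D` to probability
measures on `W`, and `γ ≥ 1`, the contraction coefficient of `K` under `E_γ` equals
`sup_{w₁,w₂ ∈ D} E_γ(K(w₁)‖K(w₂))`. -/
theorem contraction_coefficient_Egamma {d : ℕ}
    (D W : Set (EuclideanSpace ℝ (Fin d)))
    (K : ↥D → Measure ↥W)
    (hKprob : ∀ w, IsProbabilityMeasure (K w))
    (hKmeas : Measurable K)
    (γ : ℝ) (hγ : 1 ≤ γ) :
    etaGamma γ K = ⨆ p : ↥D × ↥D, Egamma γ (K p.1) (K p.2) := by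
  have := hKprob
  exact etaGamma_eq_iSup_Egamma hKmeas hγ
end

section
/- Let m₁, m₂ ∈ ℝ^d with m₁ ≠ m₂, let σ > 0 and γ ≥ 1, and set β := ‖m₂ − m₁‖/σ. Then E_γ(N(m₁, σ²I_d) ‖ N(m₂, σ²I_d)) = Q(log γ / β − β/2) − γ · Q(log γ / β + β/2). -/
open MeasureTheory ProbabilityTheory Real

/-- The Gaussian measure `N(m, σ²I_d)` on `ℝ^d` (Euclidean space), realized as the
product of `d` one-dimensional Gaussians with variance `σ²`. -/
noncomputable def gaussE {d : ℕ} (m : EuclideanSpace ℝ (Fin d)) (σ : ℝ) :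
    Measure (EuclideanSpace ℝ (Fin d)) :=
  Measure.map (MeasurableEquiv.toLp 2 (Fin d → ℝ))
    (Measure.pi fun i => gaussianReal (m i) (Real.toNNReal (σ ^ 2)))

/-- The standard Gaussian tail function `Q(a) = (1/√(2π)) ∫_a^∞ e^{−u²/2} du`. -/
noncomputable def Qfun (a : ℝ) : ℝ :=
  (1 / Real.sqrt (2 * Real.pi)) * ∫ u in Set.Ici a, Real.exp (-u ^ 2 / 2)

open scoped ENNReal NNReal RealInnerProductSpace

/-! `N(m₁, σ²I)` has density `exp((⟪m₁ - m₂, x⟫ - (‖m₁‖² - ‖m₂‖²)/2)/σ²)` with respect to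
`N(m₂, σ²I)`, and whenever `μ = h·ν` the supremum defining `E_γ(μ‖ν)` is attained at the
superlevel set `{γ ≤ h}` (Neyman–Pearson). Here that set is the half-space
`{x | σ² log γ + (‖m₁‖² - ‖m₂‖²)/2 ≤ ⟪m₁ - m₂, x⟫}`, and under `N(m, σ²I)` the functional
`⟪m₁ - m₂, ·⟫` is a real Gaussian with mean `⟪m₁ - m₂, m⟫` and standard deviation
`σ‖m₁ - m₂‖`, so both measures of the half-space are values of `Q`. -/

namespace MeasureTheory

theorem lintegral_fin_nat_prod_eq_prod {n : ℕ} {α : Type*} [MeasurableSpace α]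
    {μ : Fin n → Measure α} [∀ i, SigmaFinite (μ i)]
    {f : Fin n → α → ℝ≥0∞} (hf : ∀ i, Measurable (f i)) :
    ∫⁻ x : Fin n → α, ∏ i, f i (x i) ∂(Measure.pi μ) = ∏ i, ∫⁻ x, f i x ∂(μ i) := by
  induction n with
  | zero => simp
  | succ n ih =>
    calc
      _ = ∫⁻ x : α × (Fin n → α), f 0 x.1 * ∏ i : Fin n, f i.succ (x.2 i)
          ∂((μ 0).prod (Measure.pi fun i => μ i.succ)) := by
        rw [← ((measurePreserving_piFinSuccAbove μ 0).symm).lintegral_comp_emb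
          (MeasurableEquiv.measurableEmbedding _)]
        simp_rw [MeasurableEquiv.piFinSuccAbove_symm_apply, Fin.insertNthEquiv,
          Fin.prod_univ_succ, Fin.insertNth_zero, Equiv.coe_fn_mk, Fin.cons_succ,
          Fin.zero_succAbove, cast_eq, Fin.cons_zero]
      _ = (∫⁻ x, f 0 x ∂μ 0) * ∏ i : Fin n, ∫⁻ x, f i.succ x ∂(μ i.succ) := by
        have hrest : Measurable fun y : Fin n → α => ∏ i : Fin n, f i.succ (y i) :=
          Finset.measurable_prod _ fun i _ => (hf i.succ).comp (measurable_pi_apply i)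
        rw [← ih fun i => hf i.succ, ← lintegral_prod_mul (hf 0).aemeasurable hrest.aemeasurable]
      _ = ∏ i, ∫⁻ x, f i x ∂(μ i) := by rw [Fin.prod_univ_succ]

theorem Measure.pi_eq_withDensity_prod {n : ℕ} {α : Type*} [MeasurableSpace α]
    {μ ν : Fin n → Measure α} [∀ i, SigmaFinite (μ i)] [∀ i, SigmaFinite (ν i)]
    {f : Fin n → α → ℝ≥0∞} (hf : ∀ i, Measurable (f i))
    (hν : ∀ i, ν i = (μ i).withDensity (f i)) :
    Measure.pi ν = (Measure.pi μ).withDensity fun x => ∏ i, f i (x i) := by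
  refine Measure.pi_eq fun s hs => ?_
  rw [withDensity_apply _ (.univ_pi hs), Measure.restrict_pi_pi, lintegral_fin_nat_prod_eq_prod hf]
  exact Finset.prod_congr rfl fun i _ => by rw [hν i, withDensity_apply _ (hs i)]

variable {α : Type*} [MeasurableSpace α] {ν : Measure α} {h : α → ℝ≥0∞} {c : ℝ≥0∞} {s : Set α}

lemma const_mul_le_withDensity_apply (hs : MeasurableSet s) (hc : ∀ x ∈ s, c ≤ h x) :
    c * ν s ≤ ν.withDensity h s := by
  rw [withDensity_apply _ hs, ← setLIntegral_const]
  exact setLIntegral_mono' hs hc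

lemma withDensity_apply_le_const_mul (hs : MeasurableSet s) (hc : ∀ x ∈ s, h x ≤ c) :
    ν.withDensity h s ≤ c * ν s := by
  rw [withDensity_apply _ hs, ← setLIntegral_const]
  exact setLIntegral_mono' hs hc

end MeasureTheory

theorem MeasurableEmbedding.map_withDensity_comp {α β : Type*} [MeasurableSpace α]
    [MeasurableSpace β] {g : α → β} (hg : MeasurableEmbedding g) (μ : Measure α) (f : β → ℝ≥0∞) :
    (μ.withDensity (f ∘ g)).map g = (μ.map g).withDensity f := by
  ext s hs
  rw [Measure.map_apply hg.measurable hs, withDensity_apply _ (hg.measurable hs),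
    withDensity_apply _ hs, hg.restrict_map, hg.lintegral_map]
  rfl

section NeymanPearson

variable {α : Type*} [MeasurableSpace α] {μ ν : Measure α} [IsFiniteMeasure μ] [IsFiniteMeasure ν]
  {h : α → ℝ≥0∞} {γ : ℝ}

lemma measureReal_sub_mul_le_of_eq_withDensity (hγ : 0 ≤ γ) (hh : Measurable h)
    (hμ : μ = ν.withDensity h) {s : Set α} (hs : MeasurableSet s) :
    μ.real s - γ * ν.real s ≤
      μ.real {x | ENNReal.ofReal γ ≤ h x} - γ * ν.real {x | ENNReal.ofReal γ ≤ h x} := by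
  set A := {x | ENNReal.ofReal γ ≤ h x}
  have hA : MeasurableSet A := measurableSet_le measurable_const hh
  have toReal_ofReal_mul (t : Set α) : (ENNReal.ofReal γ * ν t).toReal = γ * ν.real t := by
    rw [ENNReal.toReal_mul, ENNReal.toReal_ofReal hγ, measureReal_def]
  have outside : μ.real (s \ A) ≤ γ * ν.real (s \ A) := by
    rw [← toReal_ofReal_mul, measureReal_def, hμ]
    refine ENNReal.toReal_mono (by finiteness) ?_
    exact withDensity_apply_le_const_mul (hs.diff hA) fun x hx => le_of_not_ge hx.2
  have inside : γ * ν.real (A \ s) ≤ μ.real (A \ s) := by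
    rw [← toReal_ofReal_mul, measureReal_def]
    refine ENNReal.toReal_mono (by finiteness) ?_
    exact hμ ▸ const_mul_le_withDensity_apply (hA.diff hs) fun x hx => hx.1
  rw [← measureReal_inter_add_sdiff (μ := μ) (s := s) hA,
    ← measureReal_inter_add_sdiff (μ := ν) (s := s) hA,
    ← measureReal_inter_add_sdiff (μ := μ) (s := A) hs,
    ← measureReal_inter_add_sdiff (μ := ν) (s := A) hs, Set.inter_comm A s]
  linarith

theorem Egamma_eq_of_eq_withDensity (hγ : 0 ≤ γ) (hh : Measurable h) (hμ : μ = ν.withDensity h) :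
    Egamma γ μ ν =
      μ.real {x | ENNReal.ofReal γ ≤ h x} - γ * ν.real {x | ENNReal.ofReal γ ≤ h x} := by
  set A := {x | ENNReal.ofReal γ ≤ h x}
  have hbound s := measureReal_sub_mul_le_of_eq_withDensity (s := s) hγ hh hμ
  have hnonneg : 0 ≤ μ.real A - γ * ν.real A := by simpa using hbound ∅ .empty
  have hle s : ⨆ (_ : MeasurableSet s), (μ.real s - γ * ν.real s) ≤ μ.real A - γ * ν.real A :=
    Real.iSup_le (hbound s) hnonneg
  refine le_antisymm (Real.iSup_le hle hnonneg) ?_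
  exact le_ciSup_of_le ⟨_, Set.forall_mem_range.2 hle⟩ A
    (ciSup_pos (f := fun _ => μ.real A - γ * ν.real A) (measurableSet_le measurable_const hh)).ge

end NeymanPearson

namespace ProbabilityTheory

lemma gaussianReal_eq_withDensity_gaussianReal (a b : ℝ) {v : ℝ≥0} (hv : v ≠ 0) :
    gaussianReal a v = (gaussianReal b v).withDensity
      fun t => ENNReal.ofReal (exp (((a - b) * t - (a ^ 2 - b ^ 2) / 2) / v)) := by
  rw [gaussianReal_of_var_ne_zero a hv, gaussianReal_of_var_ne_zero b hv,
    ← withDensity_mul _ (measurable_gaussianPDF b v) (by fun_prop)]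
  congr 1
  funext t
  rw [Pi.mul_apply, gaussianPDF, gaussianPDF, ← ENNReal.ofReal_mul (gaussianPDFReal_nonneg b v t),
    gaussianPDFReal, gaussianPDFReal, mul_assoc _ (rexp _), ← exp_add]
  congr 3
  have : (v : ℝ) ≠ 0 := by exact_mod_cast hv
  field_simp
  ring

lemma gaussianReal_map_affine (μ : ℝ) (v : ℝ≥0) (a b : ℝ) :
    (gaussianReal μ v).map (fun x => a + b * x) =
      gaussianReal (a + b * μ) ((b ^ 2).toNNReal * v) := by
  rw [show (fun x => a + b * x) = (a + ·) ∘ (b * ·) from rfl,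
    ← Measure.map_map (by fun_prop) (by fun_prop), gaussianReal_map_const_mul,
    gaussianReal_map_const_add, add_comm, Real.toNNReal_of_nonneg (sq_nonneg b)]

lemma gaussianReal_eq_map_gaussianReal_zero_one (μ σ : ℝ) :
    gaussianReal μ (σ ^ 2).toNNReal = (gaussianReal 0 1).map (fun x => μ + σ * x) := by
  rw [gaussianReal_map_affine, mul_zero, add_zero, mul_one]

lemma stdGaussian_map_inner {E : Type*} [NormedAddCommGroup E] [InnerProductSpace ℝ E]
    [FiniteDimensional ℝ E] [MeasurableSpace E] [BorelSpace E] (v : E) :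
    (stdGaussian E).map (fun x => ⟪v, x⟫) = gaussianReal 0 (‖v‖ ^ 2).toNNReal := by
  have := IsGaussian.map_eq_gaussianReal (μ := stdGaussian E) (innerSL ℝ v)
  rwa [integral_strongDual_stdGaussian, variance_dual_stdGaussian, innerSL_apply_norm] at this

end ProbabilityTheory

lemma Qfun_nonneg (a : ℝ) : 0 ≤ Qfun a :=
  mul_nonneg (by positivity) (setIntegral_nonneg measurableSet_Ici fun u _ => (exp_pos _).le)

lemma gaussianReal_zero_one_Ici (a : ℝ) :
    gaussianReal 0 1 (Set.Ici a) = ENNReal.ofReal (Qfun a) := by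
  rw [gaussianReal_apply_eq_integral 0 one_ne_zero, Qfun, ← integral_const_mul]
  congr 1
  refine setIntegral_congr_fun measurableSet_Ici fun x _ => ?_
  simp [gaussianPDFReal]

lemma gaussianReal_Ici {s : ℝ} (μ : ℝ) (hs : 0 < s) (c : ℝ) :
    gaussianReal μ (s ^ 2).toNNReal (Set.Ici c) = ENNReal.ofReal (Qfun ((c - μ) / s)) := by
  rw [gaussianReal_eq_map_gaussianReal_zero_one, Measure.map_apply (by fun_prop) measurableSet_Ici,
    ← gaussianReal_zero_one_Ici]
  congr 1
  ext x
  simp [div_le_iff₀ hs, mul_comm, add_comm]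

section GaussE

variable {d : ℕ}

instance isProbabilityMeasure_gaussE (m : EuclideanSpace ℝ (Fin d)) (σ : ℝ) :
    IsProbabilityMeasure (gaussE m σ) :=
  Measure.isProbabilityMeasure_map (by fun_prop)

noncomputable def gaussDensityRatio (m₁ m₂ : EuclideanSpace ℝ (Fin d)) (σ : ℝ)
    (x : EuclideanSpace ℝ (Fin d)) : ℝ≥0∞ :=
  ENNReal.ofReal (exp ((⟪m₁ - m₂, x⟫ - (‖m₁‖ ^ 2 - ‖m₂‖ ^ 2) / 2) / σ ^ 2))

lemma measurable_gaussDensityRatio (m₁ m₂ : EuclideanSpace ℝ (Fin d)) (σ : ℝ) :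
    Measurable (gaussDensityRatio m₁ m₂ σ) := by
  unfold gaussDensityRatio; fun_prop

theorem gaussE_eq_withDensity (m₁ m₂ : EuclideanSpace ℝ (Fin d)) {σ : ℝ} (hσ : σ ≠ 0) :
    gaussE m₁ σ = (gaussE m₂ σ).withDensity (gaussDensityRatio m₁ m₂ σ) := by
  have hv : (σ ^ 2).toNNReal ≠ 0 := by simpa
  have hv' : ((σ ^ 2).toNNReal : ℝ) = σ ^ 2 := Real.coe_toNNReal _ (sq_nonneg σ)
  have hprod : (fun x : Fin d → ℝ => ∏ i, ENNReal.ofReal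
      (exp (((m₁ i - m₂ i) * x i - (m₁ i ^ 2 - m₂ i ^ 2) / 2) / (σ ^ 2).toNNReal))) =
      gaussDensityRatio m₁ m₂ σ ∘ MeasurableEquiv.toLp 2 (Fin d → ℝ) := by
    funext x
    rw [← ENNReal.ofReal_prod_of_nonneg fun i _ => (exp_pos _).le, ← exp_sum, ← Finset.sum_div,
      Function.comp_apply, gaussDensityRatio, EuclideanSpace.real_norm_sq_eq,
      EuclideanSpace.real_norm_sq_eq, PiLp.inner_apply, hv']
    simp only [Finset.sum_sub_distrib, ← Finset.sum_div, PiLp.sub_apply, RCLike.inner_apply,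
      conj_trivial, MeasurableEquiv.coe_toLp, mul_comm]
  rw [gaussE, gaussE, Measure.pi_eq_withDensity_prod (fun i => by fun_prop)
    fun i => gaussianReal_eq_withDensity_gaussianReal (m₁ i) (m₂ i) hv, hprod,
    (MeasurableEquiv.measurableEmbedding _).map_withDensity_comp]

lemma setOf_ofReal_le_gaussDensityRatio (m₁ m₂ : EuclideanSpace ℝ (Fin d)) {σ γ : ℝ}
    (hσ : σ ≠ 0) (hγ : 0 < γ) :
    {x | ENNReal.ofReal γ ≤ gaussDensityRatio m₁ m₂ σ x} =
      (fun x => ⟪m₁ - m₂, x⟫) ⁻¹' Set.Ici (σ ^ 2 * log γ + (‖m₁‖ ^ 2 - ‖m₂‖ ^ 2) / 2) := by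
  ext x
  rw [Set.mem_ofPred_eq, gaussDensityRatio, ENNReal.ofReal_le_ofReal_iff (exp_pos _).le,
    ← log_le_iff_le_exp hγ, le_div_iff₀ (by positivity)]
  simp only [Set.mem_preimage, Set.mem_Ici]
  constructor <;> intro h <;> linarith

lemma gaussE_eq_map_stdGaussian (m : EuclideanSpace ℝ (Fin d)) (σ : ℝ) :
    gaussE m σ = (stdGaussian _).map (fun x => m + σ • x) := by
  simp_rw [gaussE, gaussianReal_eq_map_gaussianReal_zero_one]
  rw [← Measure.pi_map_pi (fun i => by fun_prop), ← map_pi_eq_stdGaussian,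
    Measure.map_map (by fun_prop) (by fun_prop), Measure.map_map (by fun_prop) (by fun_prop)]
  rfl

lemma gaussE_map_inner (m v : EuclideanSpace ℝ (Fin d)) (σ : ℝ) :
    (gaussE m σ).map (fun x => ⟪v, x⟫) = gaussianReal ⟪v, m⟫ ((σ * ‖v‖) ^ 2).toNNReal := by
  have affine : (fun x => ⟪v, x⟫) ∘ (fun x => m + σ • x) =
      (fun t => ⟪v, m⟫ + σ * t) ∘ (fun x => ⟪v, x⟫) := by
    ext x; simp [inner_add_right, inner_smul_right]
  rw [gaussE_eq_map_stdGaussian, Measure.map_map (by fun_prop) (by fun_prop), affine,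
    ← Measure.map_map (by fun_prop) (by fun_prop), stdGaussian_map_inner,
    gaussianReal_map_affine, mul_zero, add_zero, mul_pow, Real.toNNReal_mul (sq_nonneg σ)]

lemma gaussE_real_inner_preimage_Ici (m : EuclideanSpace ℝ (Fin d))
    {v : EuclideanSpace ℝ (Fin d)} (hv : v ≠ 0) {σ : ℝ} (hσ : 0 < σ) (c : ℝ) :
    (gaussE m σ).real ((fun x => ⟪v, x⟫) ⁻¹' Set.Ici c) = Qfun ((c - ⟪v, m⟫) / (σ * ‖v‖)) := by
  rw [measureReal_def, ← Measure.map_apply (by fun_prop) measurableSet_Ici, gaussE_map_inner,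
    gaussianReal_Ici _ (by positivity), ENNReal.toReal_ofReal (Qfun_nonneg _)]

end GaussE

/-- For `m₁ ≠ m₂` in `ℝ^d`, `σ > 0`, `γ ≥ 1`, and `β = ‖m₂ − m₁‖/σ`:
`E_γ(N(m₁,σ²I) ‖ N(m₂,σ²I)) = Q(log γ/β − β/2) − γ·Q(log γ/β + β/2)`. -/
theorem Egamma_gaussian {d : ℕ} (m₁ m₂ : EuclideanSpace ℝ (Fin d)) (hm : m₁ ≠ m₂)
    (σ γ : ℝ) (hσ : 0 < σ) (hγ : 1 ≤ γ) :
    Egamma γ (gaussE m₁ σ) (gaussE m₂ σ) =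
      Qfun (Real.log γ / (‖m₂ - m₁‖ / σ) - (‖m₂ - m₁‖ / σ) / 2) -
        γ * Qfun (Real.log γ / (‖m₂ - m₁‖ / σ) + (‖m₂ - m₁‖ / σ) / 2) := by
  have hγ₀ : 0 < γ := one_pos.trans_le hγ
  have hv : m₁ - m₂ ≠ 0 := sub_ne_zero.2 hm
  have hvn : 0 < ‖m₁ - m₂‖ := norm_pos_iff.2 hv
  rw [Egamma_eq_of_eq_withDensity hγ₀.le (measurable_gaussDensityRatio m₁ m₂ σ)
      (gaussE_eq_withDensity m₁ m₂ hσ.ne'), setOf_ofReal_le_gaussDensityRatio m₁ m₂ hσ.ne' hγ₀,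
    gaussE_real_inner_preimage_Ici _ hv hσ, gaussE_real_inner_preimage_Ici _ hv hσ, norm_sub_rev m₂]
  have h₁ : ⟪m₁ - m₂, m₁⟫ = (‖m₁‖ ^ 2 - ‖m₂‖ ^ 2 + ‖m₁ - m₂‖ ^ 2) / 2 := by
    rw [norm_sub_sq_real, inner_sub_left, real_inner_self_eq_norm_sq, real_inner_comm]; ring
  have h₂ : ⟪m₁ - m₂, m₂⟫ = (‖m₁‖ ^ 2 - ‖m₂‖ ^ 2 - ‖m₁ - m₂‖ ^ 2) / 2 := by
    rw [norm_sub_sq_real, inner_sub_left, real_inner_self_eq_norm_sq]; ring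
  rw [h₁, h₂]
  congr 3 <;> field_simp <;> ring
end

section
/- Let μ and ν be probability measures on a measurable space and let γ ≥ 1. Then E_γ(μ‖ν) = (1/2)‖μ − γν‖ + (1/2)(1 − γ), where ‖μ − γν‖ denotes the total variation norm of the finite signed measure μ − γν (i.e., the sum of the total masses of the positive and negative parts of its Hahn–Jordan decomposition). -/
open MeasureTheory ProbabilityTheory Real

/-! Write `ξ = μ − γν = ξ⁺ − ξ⁻` (Jordan decomposition). Every `ξ A ≤ ξ⁺ A ≤ ξ⁺ univ`, with
equality on a set carrying `ξ⁺` and missing `ξ⁻` (they are mutually singular), so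
`E_γ(μ‖ν) = ξ⁺ univ`. Since `‖ξ‖ = ξ⁺ univ + ξ⁻ univ` and `ξ univ = ξ⁺ univ − ξ⁻ univ = 1 − γ`,
this is `(‖ξ‖ + 1 − γ) / 2`. -/

namespace MeasureTheory.SignedMeasure

variable {α : Type*} [MeasurableSpace α] (s : SignedMeasure α)

theorem apply_le_posPart_real_univ {A : Set α} (hA : MeasurableSet A) :
    s A ≤ s.toJordanDecomposition.posPart.real Set.univ := by
  rw [s.apply_eq_posPart_real_sub_negPart_real hA]
  have hpos := measureReal_mono (μ := s.toJordanDecomposition.posPart) (Set.subset_univ A)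
  linarith [measureReal_nonneg (μ := s.toJordanDecomposition.negPart) (s := A)]

theorem exists_apply_eq_posPart_real_univ :
    ∃ A, MeasurableSet A ∧ s A = s.toJordanDecomposition.posPart.real Set.univ := by
  obtain ⟨S, hS, hpos, hneg⟩ := s.toJordanDecomposition.mutuallySingular
  refine ⟨Sᶜ, hS.compl, ?_⟩
  rw [s.apply_eq_posPart_real_sub_negPart_real hS.compl, measureReal_compl hS]
  simp [measureReal_def, hpos, hneg]

theorem iSup_apply_eq_posPart_real_univ :
    ⨆ (A : Set α) (_ : MeasurableSet A), s A = s.toJordanDecomposition.posPart.real Set.univ := by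
  have hle : ∀ A, ⨆ (_ : MeasurableSet A), s A ≤ s.toJordanDecomposition.posPart.real Set.univ :=
    fun A => Real.iSup_le s.apply_le_posPart_real_univ measureReal_nonneg
  obtain ⟨A, hA, hsA⟩ := s.exists_apply_eq_posPart_real_univ
  refine le_antisymm (Real.iSup_le hle measureReal_nonneg) ?_
  refine le_ciSup_of_le ⟨_, Set.forall_mem_range.2 hle⟩ A ?_
  rw [ciSup_pos hA, hsA]

theorem totalVariation_real_univ :
    s.totalVariation.real Set.univ =
      2 * s.toJordanDecomposition.posPart.real Set.univ - s Set.univ := by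
  rw [s.apply_eq_posPart_real_sub_negPart_real MeasurableSet.univ, totalVariation,
    measureReal_add_apply]
  ring

end MeasureTheory.SignedMeasure

theorem MeasureTheory.Measure.toSignedMeasure_sub_smul_apply {α : Type*} [MeasurableSpace α]
    (μ ν : Measure α) [IsFiniteMeasure μ] [IsFiniteMeasure ν] (γ : ℝ) {A : Set α}
    (hA : MeasurableSet A) :
    (μ.toSignedMeasure - γ • ν.toSignedMeasure) A = μ.real A - γ * ν.real A := by
  rw [FunLike.coe_sub, FunLike.coe_smul, Pi.sub_apply, Pi.smul_apply,
    toSignedMeasure_apply_measurable hA, toSignedMeasure_apply_measurable hA, smul_eq_mul]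

theorem Egamma_eq_totalVariation_general {α : Type*} [MeasurableSpace α]
    (μ ν : Measure α) [IsProbabilityMeasure μ] [IsProbabilityMeasure ν]
    (γ : ℝ) :
    Egamma γ μ ν =
      (1 / 2) * ((μ.toSignedMeasure - γ • ν.toSignedMeasure).totalVariation Set.univ).toReal
        + (1 / 2) * (1 - γ) := by
  set ξ := μ.toSignedMeasure - γ • ν.toSignedMeasure
  have hEγ : Egamma γ μ ν = ⨆ (A : Set α) (_ : MeasurableSet A), ξ A :=
    iSup_congr fun A => iSup_congr fun hA =>
      (μ.toSignedMeasure_sub_smul_apply ν γ hA).symm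
  rw [hEγ, ξ.iSup_apply_eq_posPart_real_univ, ← measureReal_def, ξ.totalVariation_real_univ,
    μ.toSignedMeasure_sub_smul_apply ν γ MeasurableSet.univ]
  simp only [probReal_univ]
  ring

/-- For probability measures `μ, ν` and `γ ≥ 1`,
`E_γ(μ‖ν) = ½‖μ − γν‖ + ½(1 − γ)`, where `‖μ − γν‖` is the total variation norm of
the finite signed measure `μ − γν` (the total mass of its total variation measure,
i.e. the sum of the masses of the Hahn–Jordan positive and negative parts). -/
theorem Egamma_eq_totalVariation {α : Type*} [MeasurableSpace α]
    (μ ν : Measure α) [IsProbabilityMeasure μ] [IsProbabilityMeasure ν]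
    (γ : ℝ) (hγ : 1 ≤ γ) :
    Egamma γ μ ν =
      (1 / 2) * ((μ.toSignedMeasure - γ • ν.toSignedMeasure).totalVariation Set.univ).toReal
        + (1 / 2) * (1 - γ) :=
  Egamma_eq_totalVariation_general μ ν γ
end

section
/- Let μ and ν be probability measures on a measurable space with μ absolutely continuous with respect to ν, let g := dμ/dν be the Radon–Nikodym derivative, and let γ ≥ 1. Then E_γ(μ‖ν) = μ({g > γ}) − γ·ν({g > γ}). -/
open MeasureTheory ProbabilityTheory Real

theorem setIntegral_le_setIntegral_of_nonneg_of_nonpos_compl {α : Type*} [MeasurableSpace α]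
    {μ : Measure α} {f : α → ℝ} {s t : Set α} (hs : MeasurableSet s) (ht : MeasurableSet t)
    (hf : Integrable f μ) (h_nonneg : 0 ≤ᵐ[μ.restrict s] f) (h_nonpos : ∀ x ∉ s, f x ≤ 0) :
    ∫ x in t, f x ∂μ ≤ ∫ x in s, f x ∂μ := by
  have h_inter : ∫ x in t ∩ s, f x ∂μ ≤ ∫ x in s, f x ∂μ :=
    setIntegral_mono_set hf.integrableOn h_nonneg Set.inter_subset_right.eventuallyLE
  have h_sdiff : ∫ x in t \ s, f x ∂μ ≤ 0 :=
    setIntegral_nonpos (ht.diff hs) fun x hx ↦ h_nonpos x hx.2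
  rw [← integral_inter_add_sdiff hs hf.integrableOn]
  linarith

theorem ciSup_mem_eq_of_le {ι : Type*} {p : ι → Prop} {F : ι → ℝ} {i₀ : ι} (hi₀ : p i₀)
    (h_max : ∀ i, p i → F i ≤ F i₀) (h_nonneg : 0 ≤ F i₀) :
    ⨆ (i) (_ : p i), F i = F i₀ := by
  have h_le : ∀ i, ⨆ (_ : p i), F i ≤ F i₀ := fun i ↦ Real.iSup_le (h_max i) h_nonneg
  refine le_antisymm (Real.iSup_le h_le h_nonneg) ?_
  calc F i₀ = ⨆ (_ : p i₀), F i₀ := by rw [ciSup_pos hi₀]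
    _ ≤ ⨆ (i) (_ : p i), F i := le_ciSup ⟨F i₀, Set.forall_mem_range.2 h_le⟩ i₀

namespace MeasureTheory.Measure

variable {α : Type*} [MeasurableSpace α] {μ ν : Measure α}

theorem toReal_sub_mul_toReal_eq_setIntegral_rnDeriv_sub [IsFiniteMeasure μ] [IsFiniteMeasure ν]
    (hμν : μ ≪ ν) (γ : ℝ) (A : Set α) :
    (μ A).toReal - γ * (ν A).toReal = ∫ x in A, ((μ.rnDeriv ν x).toReal - γ) ∂ν := by
  rw [integral_sub integrable_toReal_rnDeriv.integrableOn (integrable_const γ).integrableOn,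
    setIntegral_toReal_rnDeriv hμν, setIntegral_const, smul_eq_mul, mul_comm, measureReal_def,
    measureReal_def]

theorem measurableSet_ofReal_lt_rnDeriv (μ ν : Measure α) (γ : ℝ) :
    MeasurableSet {x | ENNReal.ofReal γ < μ.rnDeriv ν x} :=
  measurableSet_lt measurable_const (μ.measurable_rnDeriv ν)

theorem ae_restrict_le_toReal_rnDeriv [SigmaFinite μ] {γ : ℝ} (hγ : 0 ≤ γ) :
    ∀ᵐ x ∂ν.restrict {x | ENNReal.ofReal γ < μ.rnDeriv ν x}, γ ≤ (μ.rnDeriv ν x).toReal := by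
  filter_upwards [ae_restrict_of_ae (rnDeriv_lt_top μ ν),
    ae_restrict_mem (measurableSet_ofReal_lt_rnDeriv μ ν γ)] with x hx_fin hx_lt
  exact ((ENNReal.ofReal_lt_iff_lt_toReal hγ hx_fin.ne).mp hx_lt).le

end MeasureTheory.Measure

/-- For probability measures `μ ≪ ν` with Radon–Nikodym derivative
`g = dμ/dν` and `γ ≥ 1`: `E_γ(μ‖ν) = μ({g > γ}) − γ·ν({g > γ})`. -/
theorem Egamma_eq_rnDeriv_level_set {α : Type*} [MeasurableSpace α]
    (μ ν : Measure α) [IsProbabilityMeasure μ] [IsProbabilityMeasure ν]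
    (hac : μ ≪ ν) (γ : ℝ) (hγ : 1 ≤ γ) :
    Egamma γ μ ν =
      (μ {x | ENNReal.ofReal γ < μ.rnDeriv ν x}).toReal
        - γ * (ν {x | ENNReal.ofReal γ < μ.rnDeriv ν x}).toReal := by
  have hγ₀ : 0 ≤ γ := zero_le_one.trans hγ
  have hS := Measure.measurableSet_ofReal_lt_rnDeriv μ ν γ
  have h_max : ∀ A, MeasurableSet A → (μ A).toReal - γ * (ν A).toReal ≤
      (μ {x | ENNReal.ofReal γ < μ.rnDeriv ν x}).toReal
        - γ * (ν {x | ENNReal.ofReal γ < μ.rnDeriv ν x}).toReal := by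
    intro A hA
    simp only [Measure.toReal_sub_mul_toReal_eq_setIntegral_rnDeriv_sub hac]
    refine setIntegral_le_setIntegral_of_nonneg_of_nonpos_compl hS hA
      (Measure.integrable_toReal_rnDeriv.sub (integrable_const γ)) ?_ ?_
    · filter_upwards [Measure.ae_restrict_le_toReal_rnDeriv hγ₀] with x hx
      exact sub_nonneg.2 hx
    · exact fun x hx ↦ sub_nonpos.2 (ENNReal.toReal_le_of_le_ofReal hγ₀ (not_lt.mp hx))
  exact ciSup_mem_eq_of_le hS h_max (by simpa using h_max ∅ .empty)
end

section
/- Let a, b ∈ [0, 1/2] and let K^{a,b} be the Markov kernel on the two-point space {0, 1} with K^{a,b}(0) assigning probabilities (1 − a, a) and K^{a,b}(1) assigning probabilities (b, 1 − b) to the points (0, 1). Then for every γ ≥ 1, η_γ(K^{a,b}) = max{ ((1 − a) − γb)⁺, ((1 − b) − γa)⁺ }, where (x)⁺ := max(x, 0). In particular, η₁(K^{a,b}) = 1 − a − b. -/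
open MeasureTheory ProbabilityTheory Real
open scoped ENNReal NNReal

/-!
On `{0, 1}` and for `γ ≥ 1`, the divergence of two probability measures is
`E_γ(μ‖ν) = max (0, s, t)` with `s = μ{0} - γ ν{0}` and `t = μ{1} - γ ν{1}`; since
`s + t = 1 - γ ≤ 0`, at most one of `s, t` is positive. The channel maps `(s, t)` to
`((1 - a) s + b t, a s + (1 - b) t)`. If `s > 0`, the first coordinate is at most
`((1 - a) - γ b) s` and the second is nonpositive (symmetrically if `t > 0`), which bounds
`η_γ` from above. The point masses `δ₀, δ₁` satisfy `E_γ(δ₀‖δ₁) = 1` and are sent to `K(0), K(1)`,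
whose divergences give the matching lower bound.
-/

section etaGamma

variable {α β : Type*} [MeasurableSpace α] [MeasurableSpace β] {γ c : ℝ} {K : α → Measure β}

lemma etaGamma_le_s18 (hc : 0 ≤ c)
    (h : ∀ μ ν : Measure α, IsProbabilityMeasure μ → IsProbabilityMeasure ν →
      Egamma γ μ ν ≠ 0 → Egamma γ (μ.bind K) (ν.bind K) / Egamma γ μ ν ≤ c) :
    etaGamma γ K ≤ c :=
  Real.iSup_le (fun p => h _ _ p.2.1 p.2.2.1 p.2.2.2) hc

lemma le_etaGamma
    (h : ∀ μ ν : Measure α, IsProbabilityMeasure μ → IsProbabilityMeasure ν →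
      Egamma γ μ ν ≠ 0 → Egamma γ (μ.bind K) (ν.bind K) / Egamma γ μ ν ≤ c)
    (μ ν : Measure α) [IsProbabilityMeasure μ] [IsProbabilityMeasure ν] (hμν : Egamma γ μ ν ≠ 0) :
    Egamma γ (μ.bind K) (ν.bind K) / Egamma γ μ ν ≤ etaGamma γ K := by
  refine le_ciSup (f := fun p : {p : Measure α × Measure α //
      IsProbabilityMeasure p.1 ∧ IsProbabilityMeasure p.2 ∧ Egamma γ p.1 p.2 ≠ 0} =>
    Egamma γ (p.1.1.bind K) (p.1.2.bind K) / Egamma γ p.1.1 p.1.2) ⟨c, ?_⟩ ⟨(μ, ν), ‹_›, ‹_›, hμν⟩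
  rintro _ ⟨p, rfl⟩
  exact h _ _ p.2.1 p.2.2.1 p.2.2.2

end etaGamma

lemma measureReal_bind_of_fintype {α β : Type*} [MeasurableSpace α] [MeasurableSpace β]
    [Fintype α] [MeasurableSingletonClass α] (μ : Measure α) [IsFiniteMeasure μ]
    (K : α → Measure β) [∀ i, IsFiniteMeasure (K i)] {s : Set β} (hs : MeasurableSet s) :
    (μ.bind K).real s = ∑ i, (K i).real s * μ.real {i} := by
  rw [measureReal_def, Measure.bind_apply hs (measurable_of_countable K).aemeasurable,
    lintegral_fintype, ENNReal.toReal_sum (fun i _ => by finiteness)]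
  simp only [ENNReal.toReal_mul, measureReal_def]

lemma measureReal_sub_mul_measureReal_le_one {α : Type*} [MeasurableSpace α] {γ : ℝ} (hγ : 0 ≤ γ)
    (μ ν : Measure α) [IsProbabilityMeasure μ] (A : Set α) : μ.real A - γ * ν.real A ≤ 1 := by
  have : 0 ≤ γ * ν.real A := by positivity
  linarith [measureReal_le_one (μ := μ) (s := A)]

lemma Fin.two_set_cases (A : Set (Fin 2)) : A = ∅ ∨ A = {0} ∨ A = {1} ∨ A = Set.univ := by
  by_cases h0 : (0 : Fin 2) ∈ A <;> by_cases h1 : (1 : Fin 2) ∈ A <;>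
    simp [Set.ext_iff, Fin.forall_fin_two, h0, h1]

lemma measureReal_zero_add_measureReal_one (μ : Measure (Fin 2)) [IsProbabilityMeasure μ] :
    μ.real {0} + μ.real {1} = 1 := by
  rw [← probReal_univ (μ := μ), ← Finset.coe_univ, ← sum_measureReal_singleton, Fin.sum_univ_two]

lemma Egamma_fin_two {γ : ℝ} (hγ : 1 ≤ γ) (μ ν : Measure (Fin 2)) [IsProbabilityMeasure μ]
    [IsProbabilityMeasure ν] :
    Egamma γ μ ν = max 0 (max (μ.real {0} - γ * ν.real {0}) (μ.real {1} - γ * ν.real {1})) := by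
  have hbdd : BddAbove (Set.range fun A : Set (Fin 2) => μ.real A - γ * ν.real A) := by
    refine ⟨1, ?_⟩
    rintro _ ⟨A, rfl⟩
    exact measureReal_sub_mul_measureReal_le_one (by linarith) _ _ _
  simp only [Egamma, ciSup_pos (MeasurableSet.of_discrete), ← measureReal_def]
  refine le_antisymm (ciSup_le fun A => ?_) (max_le ?_ (max_le ?_ ?_))
  · rcases Fin.two_set_cases A with rfl | rfl | rfl | rfl
    · simp
    · exact le_max_of_le_right (le_max_left _ _)
    · exact le_max_of_le_right (le_max_right _ _)
    · simp only [probReal_univ]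
      exact le_max_of_le_left (by linarith)
  · simpa using le_ciSup hbdd ∅
  · exact le_ciSup hbdd {0}
  · exact le_ciSup hbdd {1}

lemma Egamma_fin_two_nonneg {γ : ℝ} (hγ : 1 ≤ γ) (μ ν : Measure (Fin 2))
    [IsProbabilityMeasure μ] [IsProbabilityMeasure ν] : 0 ≤ Egamma γ μ ν :=
  (Egamma_fin_two hγ μ ν).symm ▸ le_max_left _ _

lemma Egamma_dirac_dirac_fin_two {γ : ℝ} (hγ : 1 ≤ γ) {i j : Fin 2} (hij : i ≠ j) :
    Egamma γ (Measure.dirac i) (Measure.dirac j) = 1 := by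
  rw [Egamma_fin_two hγ]
  fin_cases i <;> fin_cases j <;> simp_all [measureReal_def] <;> linarith

lemma Egamma_le_etaGamma_fin_two {β : Type*} [MeasurableSpace β] {K : Fin 2 → Measure β}
    {γ c : ℝ} (hγ : 1 ≤ γ)
    (h : ∀ μ ν : Measure (Fin 2), IsProbabilityMeasure μ → IsProbabilityMeasure ν →
      Egamma γ μ ν ≠ 0 → Egamma γ (μ.bind K) (ν.bind K) / Egamma γ μ ν ≤ c)
    {i j : Fin 2} (hij : i ≠ j) :
    Egamma γ (K i) (K j) ≤ etaGamma γ K := by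
  have hδ := Egamma_dirac_dirac_fin_two hγ hij
  simpa [hδ, Measure.dirac_bind (measurable_of_countable K)] using
    le_etaGamma h (Measure.dirac i) (Measure.dirac j) (by simp [hδ])

lemma one_sub_mul_add_mul_le {γ a b s t : ℝ} (hγ : 1 ≤ γ) (hb : 0 ≤ b) (hab : a + b ≤ 1)
    (hst : s + t = 1 - γ) (hs : s ≤ 1) :
    (1 - a) * s + b * t ≤ max ((1 - a) - γ * b) 0 * max s 0 := by
  obtain rfl : t = 1 - γ - s := by linarith
  rcases le_or_gt s 0 with hs0 | hs0
  · rw [max_eq_right hs0, mul_zero]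
    nlinarith [mul_nonneg hb (sub_nonneg.2 hγ)]
  · rw [max_eq_left hs0.le]
    -- the difference of the two sides is `b (1 - γ) (1 - s) ≤ 0`
    calc (1 - a) * s + b * (1 - γ - s) ≤ ((1 - a) - γ * b) * s := by
          nlinarith [mul_nonneg hb (mul_nonneg (sub_nonneg.2 hγ) (sub_nonneg.2 hs))]
      _ ≤ max ((1 - a) - γ * b) 0 * s := by gcongr; exact le_max_left _ _

lemma binary_contraction {γ a b s t : ℝ} (hγ : 1 ≤ γ) (ha : 0 ≤ a) (hb : 0 ≤ b)
    (hab : a + b ≤ 1) (hst : s + t = 1 - γ) (hs : s ≤ 1) (ht : t ≤ 1) :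
    max 0 (max ((1 - a) * s + b * t) (a * s + (1 - b) * t)) ≤
      max (max ((1 - a) - γ * b) 0) (max ((1 - b) - γ * a) 0) * max 0 (max s t) := by
  have hM : 0 ≤ max (max ((1 - a) - γ * b) 0) (max ((1 - b) - γ * a) 0) :=
    le_max_of_le_left (le_max_right _ _)
  refine max_le (by positivity) (max_le ?_ ?_)
  · calc (1 - a) * s + b * t ≤ max ((1 - a) - γ * b) 0 * max s 0 :=
          one_sub_mul_add_mul_le hγ hb hab hst hs
      _ ≤ _ := mul_le_mul (le_max_left _ _)
          (max_le (le_max_of_le_right (le_max_left _ _)) (le_max_left _ _)) (le_max_right _ _) hM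
  · calc a * s + (1 - b) * t = (1 - b) * t + a * s := by ring
      _ ≤ max ((1 - b) - γ * a) 0 * max t 0 :=
          one_sub_mul_add_mul_le hγ ha (by linarith) (by linarith) ht
      _ ≤ _ := mul_le_mul (le_max_right _ _)
          (max_le (le_max_of_le_right (le_max_right _ _)) (le_max_left _ _)) (le_max_right _ _) hM

noncomputable def binaryChannel (a b : ℝ) : Fin 2 → Measure (Fin 2) := fun i =>
  if i = 0 then
    ENNReal.ofReal (1 - a) • Measure.dirac 0 + ENNReal.ofReal a • Measure.dirac 1
  else
    ENNReal.ofReal b • Measure.dirac 0 + ENNReal.ofReal (1 - b) • Measure.dirac 1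

namespace binaryChannel

variable {a b : ℝ}

instance (a b : ℝ) (i : Fin 2) : IsFiniteMeasure (binaryChannel a b i) := by
  constructor
  unfold binaryChannel
  split_ifs <;> simp [ENNReal.add_lt_top]

@[simp] lemma real_zero_zero (ha : a ≤ 1) : (binaryChannel a b 0).real {0} = 1 - a := by
  simp [binaryChannel, measureReal_def, ha]

@[simp] lemma real_zero_one (ha : 0 ≤ a) : (binaryChannel a b 0).real {1} = a := by
  simp [binaryChannel, measureReal_def, ha]

@[simp] lemma real_one_zero (hb : 0 ≤ b) : (binaryChannel a b 1).real {0} = b := by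
  simp [binaryChannel, measureReal_def, hb]

@[simp] lemma real_one_one (hb : b ≤ 1) : (binaryChannel a b 1).real {1} = 1 - b := by
  simp [binaryChannel, measureReal_def, hb]

lemma isProbabilityMeasure (ha : a ∈ Set.Icc 0 1) (hb : b ∈ Set.Icc 0 1) (i : Fin 2) :
    IsProbabilityMeasure (binaryChannel a b i) := by
  rw [isProbabilityMeasure_iff_real, ← Finset.coe_univ, ← sum_measureReal_singleton,
    Fin.sum_univ_two]
  fin_cases i <;> simp [ha.1, ha.2, hb.1, hb.2]

lemma Egamma_bind_le {γ : ℝ} (hγ : 1 ≤ γ) (ha : 0 ≤ a) (hb : 0 ≤ b) (hab : a + b ≤ 1)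
    (μ ν : Measure (Fin 2)) [IsProbabilityMeasure μ] [IsProbabilityMeasure ν] :
    Egamma γ (μ.bind (binaryChannel a b)) (ν.bind (binaryChannel a b)) ≤
      max (max ((1 - a) - γ * b) 0) (max ((1 - b) - γ * a) 0) * Egamma γ μ ν := by
  have hK : ∀ ξ : Measure (Fin 2), IsProbabilityMeasure ξ →
      IsProbabilityMeasure (ξ.bind (binaryChannel a b)) := fun ξ _ =>
    isProbabilityMeasure_bind (measurable_of_countable _).aemeasurable <| ae_of_all _ <|
      isProbabilityMeasure ⟨ha, by linarith⟩ ⟨hb, by linarith⟩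
  have := hK μ ‹_›
  have := hK ν ‹_›
  rw [Egamma_fin_two hγ, Egamma_fin_two hγ]
  simp only [measureReal_bind_of_fintype _ _ (MeasurableSet.singleton _), Fin.sum_univ_two,
    real_zero_zero (show a ≤ 1 by linarith), real_zero_one ha, real_one_zero hb,
    real_one_one (show b ≤ 1 by linarith)]
  have hμ := measureReal_zero_add_measureReal_one μ
  have hν := measureReal_zero_add_measureReal_one ν
  convert binary_contraction hγ ha hb hab (s := μ.real {0} - γ * ν.real {0})
    (t := μ.real {1} - γ * ν.real {1}) (by linear_combination hμ - γ * hν) ?_ ?_ using 3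
  · ring
  · ring
  all_goals exact measureReal_sub_mul_measureReal_le_one (by linarith) _ _ _

end binaryChannel

lemma etaGamma_binaryChannel {a b γ : ℝ} (hγ : 1 ≤ γ) (ha : 0 ≤ a) (hb : 0 ≤ b)
    (hab : a + b ≤ 1) :
    etaGamma γ (binaryChannel a b) =
      max (max ((1 - a) - γ * b) 0) (max ((1 - b) - γ * a) 0) := by
  have hM : 0 ≤ max (max ((1 - a) - γ * b) 0) (max ((1 - b) - γ * a) 0) :=
    le_max_of_le_left (le_max_right _ _)
  have hratio : ∀ μ ν : Measure (Fin 2), IsProbabilityMeasure μ → IsProbabilityMeasure ν →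
      Egamma γ μ ν ≠ 0 →
      Egamma γ (μ.bind (binaryChannel a b)) (ν.bind (binaryChannel a b)) / Egamma γ μ ν ≤
        max (max ((1 - a) - γ * b) 0) (max ((1 - b) - γ * a) 0) := fun μ ν _ _ _ =>
    div_le_of_le_mul₀ (Egamma_fin_two_nonneg hγ μ ν) hM
      (binaryChannel.Egamma_bind_le hγ ha hb hab μ ν)
  have := binaryChannel.isProbabilityMeasure (a := a) (b := b) ⟨ha, by linarith⟩ ⟨hb, by linarith⟩
  refine le_antisymm (etaGamma_le_s18 hM hratio) (max_le ?_ ?_)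
  · calc max ((1 - a) - γ * b) 0
        ≤ Egamma γ (binaryChannel a b 0) (binaryChannel a b 1) := by
          rw [Egamma_fin_two hγ, binaryChannel.real_zero_zero (by linarith),
            binaryChannel.real_one_zero hb]
          exact max_le (le_max_of_le_right (le_max_left _ _)) (le_max_left _ _)
      _ ≤ etaGamma γ (binaryChannel a b) := Egamma_le_etaGamma_fin_two hγ hratio (by decide)
  · calc max ((1 - b) - γ * a) 0
        ≤ Egamma γ (binaryChannel a b 1) (binaryChannel a b 0) := by
          rw [Egamma_fin_two hγ, binaryChannel.real_one_one (by linarith),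
            binaryChannel.real_zero_one ha]
          exact max_le (le_max_of_le_right (le_max_right _ _)) (le_max_left _ _)
      _ ≤ etaGamma γ (binaryChannel a b) := Egamma_le_etaGamma_fin_two hγ hratio (by decide)

/-- For `a, b ∈ [0, 1/2]`, the binary channel `K^{a,b}` on `{0,1}`
(with `K(0) = (1−a, a)` and `K(1) = (b, 1−b)`) satisfies, for every `γ ≥ 1`,
`η_γ(K^{a,b}) = max{((1−a) − γb)⁺, ((1−b) − γa)⁺}`; in particular
`η₁(K^{a,b}) = 1 − a − b`. -/
theorem etaGamma_binary_channel (a b : ℝ)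
    (ha : a ∈ Set.Icc (0 : ℝ) (1 / 2)) (hb : b ∈ Set.Icc (0 : ℝ) (1 / 2))
    (K : Fin 2 → Measure (Fin 2))
    (hK : K = fun i =>
      if i = 0 then
        ENNReal.ofReal (1 - a) • Measure.dirac 0 + ENNReal.ofReal a • Measure.dirac 1
      else
        ENNReal.ofReal b • Measure.dirac 0 + ENNReal.ofReal (1 - b) • Measure.dirac 1) :
    (∀ γ : ℝ, 1 ≤ γ →
        etaGamma γ K = max (max ((1 - a) - γ * b) 0) (max ((1 - b) - γ * a) 0)) ∧
      etaGamma 1 K = 1 - a - b := by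
  obtain rfl : K = binaryChannel a b := hK
  have hab : a + b ≤ 1 := by linarith [ha.2, hb.2]
  have hη := fun γ (hγ : 1 ≤ γ) => etaGamma_binaryChannel hγ ha.1 hb.1 hab
  refine ⟨hη, ?_⟩
  rw [hη 1 le_rfl]
  grind
end
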